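/- arXiv:1711.02812 — 2 statements merged into one kernel-verified Lean document; each statement's English description precedes it below -/
import Mathlib

section
/- Let W = p₁(x₁³+x₂³+x₃³−3X₁X₂X₃) + p₂(X₁³+X₂³+X₃³−3x₁x₂x₃) and let J ⊂ ℂ[p₁,p₂,x₁,x₂,x₃,X₁,X₂,X₃] be the ideal generated by its eight partial derivatives. Then in the quotient ring ℂ[p₁,p₂,x,X]/J the following classes all coincide: p₁x₁³ = p₁x₂³ = p₁x₃³ = p₂x₁x₂x₃ = p₁X₁X₂X₃ = p₂X₁³ = p₂X₂³ = p₂X₃³. -/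
open MvPolynomial

/-- The superpotential `W = p₁(x₁³+x₂³+x₃³−3X₁X₂X₃) + p₂(X₁³+X₂³+X₃³−3x₁x₂x₃)`,
with variables `p₁,p₂,x₁,x₂,x₃,X₁,X₂,X₃` indexed by `0,…,7`. -/
noncomputable def LT_W : MvPolynomial (Fin 8) ℂ :=
  X 0 * (X 2 ^ 3 + X 3 ^ 3 + X 4 ^ 3 - 3 * (X 5 * X 6 * X 7)) +
  X 1 * (X 5 ^ 3 + X 6 ^ 3 + X 7 ^ 3 - 3 * (X 2 * X 3 * X 4))

/-- The Jacobi ideal of `W`, generated by its eight partial derivatives. -/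
noncomputable def LT_JacobiIdeal : Ideal (MvPolynomial (Fin 8) ℂ) :=
  Ideal.span (Set.range fun i : Fin 8 => pderiv i LT_W)

local notation "mk" => Ideal.Quotient.mk LT_JacobiIdeal

lemma LT_pd3 (i : Fin 8) : (pderiv i) (3 : MvPolynomial (Fin 8) ℂ) = 0 := by
  rw [← map_ofNat (C : ℂ →+* MvPolynomial (Fin 8) ℂ) 3, pderiv_C]

lemma LT_mem (i : Fin 8) : pderiv i LT_W ∈ LT_JacobiIdeal :=
  Ideal.subset_span ⟨i, rfl⟩

lemma LT_h0 : pderiv (0 : Fin 8) LT_W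
    = X 2 ^ 3 + X 3 ^ 3 + X 4 ^ 3 - 3 * (X 5 * X 6 * X 7) := by
  simp [LT_W, LT_pd3]

lemma LT_h2 : pderiv (2 : Fin 8) LT_W
    = 3 * X 0 * X 2 ^ 2 - 3 * (X 1 * (X 3 * X 4)) := by
  simp [LT_W, LT_pd3]; ring

lemma LT_h3 : pderiv (3 : Fin 8) LT_W
    = 3 * X 0 * X 3 ^ 2 - 3 * (X 1 * (X 2 * X 4)) := by
  simp [LT_W, LT_pd3]; ring

lemma LT_h4 : pderiv (4 : Fin 8) LT_W
    = 3 * X 0 * X 4 ^ 2 - 3 * (X 1 * (X 2 * X 3)) := by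
  simp [LT_W, LT_pd3]; ring

lemma LT_h5 : pderiv (5 : Fin 8) LT_W
    = 3 * X 1 * X 5 ^ 2 - 3 * (X 0 * (X 6 * X 7)) := by
  simp [LT_W, LT_pd3]; ring

lemma LT_h6 : pderiv (6 : Fin 8) LT_W
    = 3 * X 1 * X 6 ^ 2 - 3 * (X 0 * (X 5 * X 7)) := by
  simp [LT_W, LT_pd3]; ring

lemma LT_h7 : pderiv (7 : Fin 8) LT_W
    = 3 * X 1 * X 7 ^ 2 - 3 * (X 0 * (X 5 * X 6)) := by
  simp [LT_W, LT_pd3]; ring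

lemma LT_hc : (C (1/3 : ℂ) : MvPolynomial (Fin 8) ℂ) * 3 = 1 := by
  rw [← map_ofNat (C : ℂ →+* MvPolynomial (Fin 8) ℂ) 3, ← C_mul]
  norm_num

theorem stmt9 :
    mk (X 0 * X 2 ^ 3) = mk (X 0 * X 3 ^ 3) ∧
    mk (X 0 * X 3 ^ 3) = mk (X 0 * X 4 ^ 3) ∧
    mk (X 0 * X 4 ^ 3) = mk (X 1 * (X 2 * X 3 * X 4)) ∧
    mk (X 1 * (X 2 * X 3 * X 4)) = mk (X 0 * (X 5 * X 6 * X 7)) ∧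
    mk (X 0 * (X 5 * X 6 * X 7)) = mk (X 1 * X 5 ^ 3) ∧
    mk (X 1 * X 5 ^ 3) = mk (X 1 * X 6 ^ 3) ∧
    mk (X 1 * X 6 ^ 3) = mk (X 1 * X 7 ^ 3) := by
  refine ⟨?_, ?_, ?_, ?_, ?_, ?_, ?_⟩
  · rw [Ideal.Quotient.eq]
    have key : (X 0 * X 2 ^ 3 - X 0 * X 3 ^ 3 : MvPolynomial (Fin 8) ℂ)
        = C (1/3) * X 2 * pderiv 2 LT_W - C (1/3) * X 3 * pderiv 3 LT_W := by
      rw [LT_h2, LT_h3]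
      linear_combination (-(X 0 * X 2 ^ 3 - X 0 * X 3 ^ 3 : MvPolynomial (Fin 8) ℂ)) * LT_hc
    rw [key]
    exact sub_mem (Ideal.mul_mem_left _ _ (LT_mem 2)) (Ideal.mul_mem_left _ _ (LT_mem 3))
  · rw [Ideal.Quotient.eq]
    have key : (X 0 * X 3 ^ 3 - X 0 * X 4 ^ 3 : MvPolynomial (Fin 8) ℂ)
        = C (1/3) * X 3 * pderiv 3 LT_W - C (1/3) * X 4 * pderiv 4 LT_W := by
      rw [LT_h3, LT_h4]
      linear_combination (-(X 0 * X 3 ^ 3 - X 0 * X 4 ^ 3 : MvPolynomial (Fin 8) ℂ)) * LT_hc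
    rw [key]
    exact sub_mem (Ideal.mul_mem_left _ _ (LT_mem 3)) (Ideal.mul_mem_left _ _ (LT_mem 4))
  · rw [Ideal.Quotient.eq]
    have key : (X 0 * X 4 ^ 3 - X 1 * (X 2 * X 3 * X 4) : MvPolynomial (Fin 8) ℂ)
        = C (1/3) * X 4 * pderiv 4 LT_W := by
      rw [LT_h4]
      linear_combination (-(X 0 * X 4 ^ 3 - X 1 * (X 2 * X 3 * X 4) : MvPolynomial (Fin 8) ℂ)) * LT_hc
    rw [key]
    exact Ideal.mul_mem_left _ _ (LT_mem 4)
  · rw [Ideal.Quotient.eq]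
    have key : (X 1 * (X 2 * X 3 * X 4) - X 0 * (X 5 * X 6 * X 7) : MvPolynomial (Fin 8) ℂ)
        = C (1/3) * C (1/3) * (3 * X 0 * pderiv 0 LT_W - X 2 * pderiv 2 LT_W
            - X 3 * pderiv 3 LT_W - X 4 * pderiv 4 LT_W) := by
      rw [LT_h0, LT_h2, LT_h3, LT_h4]
      linear_combination (-(X 1 * (X 2 * X 3 * X 4) - X 0 * (X 5 * X 6 * X 7) : MvPolynomial (Fin 8) ℂ)
        * (1 + 3 * C (1/3))) * LT_hc
    rw [key]
    exact Ideal.mul_mem_left _ _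
      (sub_mem (sub_mem (sub_mem (Ideal.mul_mem_left _ _ (LT_mem 0))
        (Ideal.mul_mem_left _ _ (LT_mem 2))) (Ideal.mul_mem_left _ _ (LT_mem 3)))
        (Ideal.mul_mem_left _ _ (LT_mem 4)))
  · rw [Ideal.Quotient.eq]
    have key : (X 0 * (X 5 * X 6 * X 7) - X 1 * X 5 ^ 3 : MvPolynomial (Fin 8) ℂ)
        = -(C (1/3) * X 5 * pderiv 5 LT_W) := by
      rw [LT_h5]
      linear_combination (-(X 0 * (X 5 * X 6 * X 7) - X 1 * X 5 ^ 3 : MvPolynomial (Fin 8) ℂ)) * LT_hc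
    rw [key]
    exact neg_mem (Ideal.mul_mem_left _ _ (LT_mem 5))
  · rw [Ideal.Quotient.eq]
    have key : (X 1 * X 5 ^ 3 - X 1 * X 6 ^ 3 : MvPolynomial (Fin 8) ℂ)
        = C (1/3) * X 5 * pderiv 5 LT_W - C (1/3) * X 6 * pderiv 6 LT_W := by
      rw [LT_h5, LT_h6]
      linear_combination (-(X 1 * X 5 ^ 3 - X 1 * X 6 ^ 3 : MvPolynomial (Fin 8) ℂ)) * LT_hc
    rw [key]
    exact sub_mem (Ideal.mul_mem_left _ _ (LT_mem 5)) (Ideal.mul_mem_left _ _ (LT_mem 6))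
  · rw [Ideal.Quotient.eq]
    have key : (X 1 * X 6 ^ 3 - X 1 * X 7 ^ 3 : MvPolynomial (Fin 8) ℂ)
        = C (1/3) * X 6 * pderiv 6 LT_W - C (1/3) * X 7 * pderiv 7 LT_W := by
      rw [LT_h6, LT_h7]
      linear_combination (-(X 1 * X 6 ^ 3 - X 1 * X 7 ^ 3 : MvPolynomial (Fin 8) ℂ)) * LT_hc
    rw [key]
    exact sub_mem (Ideal.mul_mem_left _ _ (LT_mem 6)) (Ideal.mul_mem_left _ _ (LT_mem 7))
end

section
/- Let D be the subgroup of (ℂ*)⁶ consisting of all tuples (t₁,t₂,t₃,T₁,T₂,T₃) satisfying t₁³ = t₂³ = t₃³ = T₁T₂T₃ and T₁³ = T₂³ = T₃³ = t₁t₂t₃, and let Γ₀ = {(λ,λ,λ,λ,λ,λ) : λ ∈ ℂ*} ⊂ D. Then Γ₀ is a subgroup of D and the quotient group D/Γ₀ is finite of order 81. -/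
/-- The maximal group `D` of diagonal symmetries of the Libgober–Teitelbaum cubics:
tuples `(t₁,t₂,t₃,T₁,T₂,T₃) ∈ (ℂ*)⁶` with `t₁³ = t₂³ = t₃³ = T₁T₂T₃` and
`T₁³ = T₂³ = T₃³ = t₁t₂t₃`. -/
def LT_D : Subgroup (Fin 6 → ℂˣ) where
  carrier := {g | g 0 ^ 3 = g 1 ^ 3 ∧ g 1 ^ 3 = g 2 ^ 3 ∧ g 2 ^ 3 = g 3 * g 4 * g 5 ∧
    g 3 ^ 3 = g 4 ^ 3 ∧ g 4 ^ 3 = g 5 ^ 3 ∧ g 5 ^ 3 = g 0 * g 1 * g 2}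
  one_mem' := by simp
  mul_mem' := by
    rintro a b ⟨h1, h2, h3, h4, h5, h6⟩ ⟨g1, g2, g3, g4, g5, g6⟩
    refine ⟨?_, ?_, ?_, ?_, ?_, ?_⟩ <;>
      simp only [Pi.mul_apply, mul_pow, h1, h2, h3, h4, h5, h6, g1, g2, g3, g4, g5, g6] <;>
      ac_rfl
  inv_mem' := by
    rintro a ⟨h1, h2, h3, h4, h5, h6⟩
    refine ⟨?_, ?_, ?_, ?_, ?_, ?_⟩ <;>
      simp only [Pi.inv_apply, inv_pow, h1, h2, h3, h4, h5, h6, mul_inv]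

/-- The torus `Γ₀ = {(λ,λ,λ,λ,λ,λ) : λ ∈ ℂ*}`. -/
def LT_Γ₀ : Subgroup (Fin 6 → ℂˣ) where
  carrier := {g | ∃ l : ℂˣ, g = fun _ => l}
  one_mem' := ⟨1, rfl⟩
  mul_mem' := by rintro a b ⟨l, rfl⟩ ⟨m, rfl⟩; exact ⟨l * m, rfl⟩
  inv_mem' := by rintro a ⟨l, rfl⟩; exact ⟨l⁻¹, rfl⟩

/-- Auxiliary homomorphism `D → ℂˣ × ℂˣ × ℂˣ`, `g ↦ (g₁/g₀, g₃/g₀, g₄/g₃)`. -/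
def LT_f : LT_D →* ℂˣ × ℂˣ × ℂˣ where
  toFun g := (g.1 1 / g.1 0, g.1 3 / g.1 0, g.1 4 / g.1 3)
  map_one' := by simp
  map_mul' a b := by
    refine Prod.ext ?_ (Prod.ext ?_ ?_) <;>
      simp [Pi.mul_apply, mul_div_mul_comm]

lemma LT_ker : LT_f.ker = LT_Γ₀.subgroupOf LT_D := by
  ext ⟨g, hg⟩
  obtain ⟨c1, c2, c3, c4, c5, c6⟩ := hg
  simp only [MonoidHom.mem_ker, Subgroup.mem_subgroupOf]
  constructor
  · intro h
    rw [Prod.ext_iff, Prod.ext_iff] at h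
    obtain ⟨h1, h2, h3⟩ := h
    have e1 : g 1 = g 0 := div_eq_one.mp h1
    have e2 : g 3 = g 0 := div_eq_one.mp h2
    have e3 : g 4 = g 3 := div_eq_one.mp h3
    have e4 : g 2 = g 0 := by
      refine mul_left_cancel (a := g 0 * g 0) ?_
      calc g 0 * g 0 * g 2 = g 0 * g 1 * g 2 := by rw [e1]
        _ = g 5 ^ 3 := c6.symm
        _ = g 3 ^ 3 := (c4.trans c5).symm
        _ = g 0 ^ 3 := by rw [e2]
        _ = g 0 * g 0 * g 0 := by rw [pow_succ, pow_two]
    have e5 : g 5 = g 0 := by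
      refine mul_left_cancel (a := g 0 * g 0) ?_
      calc g 0 * g 0 * g 5 = g 3 * g 4 * g 5 := by rw [e2, e3.trans e2]
        _ = g 2 ^ 3 := c3.symm
        _ = g 0 ^ 3 := by rw [e4]
        _ = g 0 * g 0 * g 0 := by rw [pow_succ, pow_two]
    exact ⟨g 0, funext fun i => by fin_cases i <;> simp [e1, e2, e3.trans e2, e4, e5]⟩
  · rintro ⟨l, hl⟩
    subst hl
    exact Prod.ext (div_self' l) (Prod.ext (div_self' l) (div_self' l))

lemma LT_cube (a : ℂˣ) : a ^ 3 = a * a * a := by rw [pow_succ, pow_two]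

lemma LT_range : (LT_f.range : Set (ℂˣ × ℂˣ × ℂˣ)) =
    {p : ℂˣ × ℂˣ × ℂˣ | p.1 ^ 3 = 1 ∧ p.2.1 ^ 9 = 1 ∧ p.2.2 ^ 3 = 1} := by
  ext p
  constructor
  · rintro ⟨⟨g, c1, c2, c3, c4, c5, c6⟩, rfl⟩
    refine ⟨?_, ?_, ?_⟩
    · show (g 1 / g 0) ^ 3 = 1
      rw [div_pow, ← c1, div_self']
    · show (g 3 / g 0) ^ 9 = 1
      have h3 : g 3 ^ 3 = g 0 * g 1 * g 2 := c4.trans (c5.trans c6)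
      have h33 : (g 3 ^ 3) ^ 3 = (g 0 ^ 3) ^ 3 := by
        rw [h3, mul_pow, mul_pow, ← c1, ← c1.trans c2, LT_cube (g 0 ^ 3)]
      have h9 : g 3 ^ 9 = g 0 ^ 9 := by
        rw [show (9 : ℕ) = 3 * 3 from rfl, pow_mul, pow_mul, h33]
      rw [div_pow, h9, div_self']
    · show (g 4 / g 3) ^ 3 = 1
      rw [div_pow, ← c4, div_self']
  · rintro ⟨hx, hy, hs⟩
    obtain ⟨x, y, s⟩ := p
    simp only at hx hy hs
    have hx6 : x ^ 6 = 1 := by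
      rw [show (6 : ℕ) = 3 * 2 from rfl, pow_mul, hx, one_pow]
    have hy21 : y ^ 21 = y ^ 3 := by
      rw [show (21 : ℕ) = 9 * 2 + 3 from rfl, pow_add, pow_mul, hy, one_pow, one_mul]
    have hs6 : s ^ 6 = 1 := by
      rw [show (6 : ℕ) = 3 * 2 from rfl, pow_mul, hs, one_pow]
    refine ⟨⟨![1, x, x ^ 2 * y ^ 3, y, y * s, y ^ 7 * s ^ 2], ?_, ?_, ?_, ?_, ?_, ?_⟩, ?_⟩
    · show (1 : ℂˣ) ^ 3 = x ^ 3
      rw [hx, one_pow]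
    · show x ^ 3 = (x ^ 2 * y ^ 3) ^ 3
      rw [hx, mul_pow, ← pow_mul, ← pow_mul]
      norm_num [hx6, hy]
    · show (x ^ 2 * y ^ 3) ^ 3 = y * (y * s) * (y ^ 7 * s ^ 2)
      rw [mul_pow, ← pow_mul, ← pow_mul]
      have : y * (y * s) * (y ^ 7 * s ^ 2) = y ^ 9 * s ^ 3 := by
        rw [show y ^ 9 = y * y * y ^ 7 by rw [← pow_two, ← pow_add],
          show s ^ 3 = s * s ^ 2 by rw [← pow_succ']]
        ac_rfl
      rw [this, hy, hs]
      norm_num [hx6]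
    · show y ^ 3 = (y * s) ^ 3
      rw [mul_pow, hs, mul_one]
    · show (y * s) ^ 3 = (y ^ 7 * s ^ 2) ^ 3
      rw [mul_pow, mul_pow, ← pow_mul, ← pow_mul, hs]
      norm_num [hy21, hs6]
    · show (y ^ 7 * s ^ 2) ^ 3 = 1 * x * (x ^ 2 * y ^ 3)
      rw [mul_pow, ← pow_mul, ← pow_mul, one_mul,
        show x * (x ^ 2 * y ^ 3) = x ^ 3 * y ^ 3 by
          rw [show x ^ 3 = x * x ^ 2 from pow_succ' x 2]; ac_rfl, hx]
      norm_num [hy21, hs6]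
    · refine Prod.ext ?_ (Prod.ext ?_ ?_) <;>
        show _ / _ = _ <;> simp

theorem stmt11 :
    LT_Γ₀ ≤ LT_D ∧ Nat.card (LT_D ⧸ LT_Γ₀.subgroupOf LT_D) = 81 := by
  constructor
  · rintro g ⟨l, rfl⟩
    exact ⟨rfl, rfl, by rw [pow_succ, pow_two], rfl, rfl, by rw [pow_succ, pow_two]⟩
  · rw [← LT_ker, Nat.card_congr (QuotientGroup.quotientKerEquivRange LT_f).toEquiv,
      ← SetLike.coe_sort_coe LT_f.range, LT_range]
    have e : {p : ℂˣ × ℂˣ × ℂˣ | p.1 ^ 3 = 1 ∧ p.2.1 ^ 9 = 1 ∧ p.2.2 ^ 3 = 1} ≃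
        rootsOfUnity 3 ℂ × rootsOfUnity 9 ℂ × rootsOfUnity 3 ℂ := by
      refine ((Equiv.subtypeProdEquivProd
          (p := fun x : ℂˣ => x ^ 3 = 1)
          (q := fun b : ℂˣ × ℂˣ => b.1 ^ 9 = 1 ∧ b.2 ^ 3 = 1)).trans (Equiv.prodCongr
        (Equiv.subtypeEquivRight fun x => ?_)
        ((Equiv.subtypeProdEquivProd
          (p := fun x : ℂˣ => x ^ 9 = 1)
          (q := fun x : ℂˣ => x ^ 3 = 1)).trans (Equiv.prodCongr
          (Equiv.subtypeEquivRight fun x => ?_)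
          (Equiv.subtypeEquivRight fun x => ?_))))) <;>
        exact (mem_rootsOfUnity _ _).symm
    have key : ∀ n : ℕ, NeZero n → Nat.card {x : ℂˣ // x ^ n = 1} = n := by
      intro n hn
      haveI := hn
      rw [Nat.card_congr (Equiv.subtypeEquivRight fun x => (mem_rootsOfUnity n x).symm),
        Complex.card_rootsOfUnity]
    rw [Nat.card_congr e, Nat.card_prod, Nat.card_prod]
    simp only [Nat.card_eq_fintype_card, Complex.card_rootsOfUnity]
end
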